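/- For every nonnegative integer n, every nonnegative integer r and every real number x, one has (r + x)^n = ∑_{l=0}^{n} ∑_{k=0}^{l} (x)_k · C(n,l) · T_r(l+r, k+r) · (k/2)^{n-l}. -/

import Mathlib

/-!
Write `S_k := Δᵏ[(t + r)ⁿ](0) / k!`. Newton's forward-difference formula gives
`(r + x)ⁿ = ∑ₖ (x)ₖ S_k`: both sides are polynomials in `x` of degree `≤ n` that agree at every
natural number by the Gregory–Newton formula. Expanding `(t + r)ⁿ = ((t + r - k/2) + k/2)ⁿ` by the
binomial theorem and using linearity of `Δᵏ` yields `S_k = ∑ₗ C(n,l) T_r(l+r,k+r) (k/2)ⁿ⁻ˡ`, and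
`T_r(l+r,k+r) = Δᵏ[(t + r - k/2)ˡ](0) / k!` vanishes for `l < k`, which truncates the inner sum.
-/

/-- The extended `r`-central factorial numbers of the second kind:
`T_r(n+r,k+r) = (1/k!) ∑_{j=0}^{k} (-1)^{k-j} C(k,j) (j + r - k/2)^n`. -/
noncomputable def rcentralT (r n k : ℕ) : ℝ :=
  (1 / (Nat.factorial k : ℝ)) * ∑ j ∈ Finset.range (k + 1),
    (-1 : ℝ) ^ (k - j) * (Nat.choose k j : ℝ) * ((j : ℝ) + (r : ℝ) - (k : ℝ) / 2) ^ n

open Finset Function Nat Polynomial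
open scoped fwdDiff

theorem Polynomial.eval_natCast_eq_sum_choose_smul_fwdDiff_iter {R : Type*} [CommRing R]
    (P : R[X]) {n : ℕ} (hP : P.natDegree ≤ n) (m : ℕ) :
    P.eval (m : R) = ∑ k ∈ range (n + 1), m.choose k • Δ_[1] ^[k] P.eval 0 :=
  calc P.eval (m : R) = ∑ k ∈ range (m + 1), m.choose k • Δ_[1] ^[k] P.eval 0 := by
        simpa using shift_eq_sum_fwdDiff_iter 1 P.eval m 0
    _ = ∑ k ∈ range (m + n + 1), m.choose k • Δ_[1] ^[k] P.eval 0 :=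
        sum_subset (range_subset_range.mpr (by omega)) fun k _ hk => by
          rw [choose_eq_zero_of_lt (by simpa using hk), zero_smul]
    _ = ∑ k ∈ range (n + 1), m.choose k • Δ_[1] ^[k] P.eval 0 := by
        refine (sum_subset (range_subset_range.mpr (by omega)) fun k _ hk => ?_).symm
        rw [fwdDiff_iter_eq_zero_of_degree_lt (by rw [mem_range] at hk; omega), Pi.zero_apply,
          smul_zero]

theorem Polynomial.eval_eq_sum_descPochhammer_mul_fwdDiff_iter {K : Type*} [Field K] [CharZero K]
    (P : K[X]) {n : ℕ} (hP : P.natDegree ≤ n) (x : K) :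
    P.eval x =
      ∑ k ∈ range (n + 1), (descPochhammer K k).eval x * (Δ_[1] ^[k] P.eval 0 / k !) := by
  have hPQ : P = ∑ k ∈ range (n + 1), descPochhammer K k * C (Δ_[1] ^[k] P.eval 0 / k !) := by
    refine eq_of_infinite_eval_eq _ _ ((Set.infinite_range_of_injective Nat.cast_injective).mono ?_)
    rintro _ ⟨m, rfl⟩
    simp only [Set.mem_ofPred_eq, P.eval_natCast_eq_sum_choose_smul_fwdDiff_iter hP,
      eval_finsetSum, eval_mul, eval_C, descPochhammer_eval_eq_descFactorial,
      descFactorial_eq_factorial_mul_choose, nsmul_eq_mul]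
    refine sum_congr rfl fun k _ => ?_
    have : (k ! : K) ≠ 0 := cast_ne_zero.mpr k.factorial_ne_zero
    push_cast
    field_simp
  conv_lhs => rw [hPQ]
  simp only [eval_finsetSum, eval_mul, eval_C]

theorem fwdDiff_iter_add_pow_eq_sum {R : Type*} [CommRing R] (c d : R) (n k : ℕ) (y : R) :
    Δ_[1] ^[k] (fun t => (t + c + d) ^ n) y =
      ∑ l ∈ range (n + 1), Δ_[1] ^[k] (fun t => (t + c) ^ l) y * d ^ (n - l) * n.choose l := by
  have hexp : (fun t => (t + c + d) ^ n) =
      ∑ l ∈ range (n + 1), (d ^ (n - l) * n.choose l) • fun t => (t + c) ^ l := by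
    ext t
    simp only [add_pow (t + c) d n, Finset.sum_apply, Pi.smul_apply, smul_eq_mul]
    exact sum_congr rfl fun l _ => by ring
  rw [hexp, fwdDiff_iter_finsetSum, Finset.sum_apply]
  refine sum_congr rfl fun l _ => ?_
  rw [fwdDiff_iter_const_smul, Pi.smul_apply, smul_eq_mul, mul_comm, mul_assoc]

theorem rcentralT_eq_fwdDiff_iter (r n k : ℕ) :
    rcentralT r n k = Δ_[1] ^[k] (fun t : ℝ => (t + (r - k / 2)) ^ n) 0 / k ! := by
  rw [fwdDiff_iter_eq_sum_shift, rcentralT, one_div_mul_eq_div]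
  congr 1
  refine sum_congr rfl fun j _ => ?_
  simp only [zsmul_eq_mul, nsmul_eq_mul, mul_one, zero_add]
  push_cast
  ring

theorem rcentralT_eq_zero_of_lt (r : ℕ) {n k : ℕ} (h : n < k) : rcentralT r n k = 0 := by
  have hdeg : ((X + C ((r : ℝ) - k / 2)) ^ n).natDegree < k := by
    rwa [natDegree_pow, natDegree_X_add_C, mul_one]
  have := fwdDiff_iter_eq_zero_of_degree_lt hdeg
  simp only [eval_pow, eval_add, eval_X, eval_C] at this
  rw [rcentralT_eq_fwdDiff_iter, this, Pi.zero_apply, zero_div]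

theorem sum_choose_mul_rcentralT_eq_fwdDiff_iter (r n k : ℕ) :
    ∑ l ∈ range (n + 1), (n.choose l : ℝ) * rcentralT r l k * ((k : ℝ) / 2) ^ (n - l) =
      Δ_[1] ^[k] (fun t : ℝ => (t + r) ^ n) 0 / k ! := by
  have hsplit : (fun t : ℝ => (t + r) ^ n) = fun t => (t + ((r : ℝ) - k / 2) + k / 2) ^ n := by
    ext t
    ring
  rw [hsplit, fwdDiff_iter_add_pow_eq_sum, sum_div]
  refine sum_congr rfl fun l _ => ?_
  rw [rcentralT_eq_fwdDiff_iter]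
  ring

/-- For every nonnegative integer `n`, nonnegative integer `r` and real `x`:
`(r + x)^n = ∑_{l=0}^{n} ∑_{k=0}^{l} (x)_k · C(n,l) · T_r(l+r,k+r) · (k/2)^{n-l}`,
where `(x)_k` is the falling factorial. -/
theorem pow_eq_double_sum_rcentralT (n r : ℕ) (x : ℝ) :
    ((r : ℝ) + x) ^ n =
      ∑ l ∈ Finset.range (n + 1), ∑ k ∈ Finset.range (l + 1),
        (descPochhammer ℝ k).eval x * (Nat.choose n l : ℝ) * rcentralT r l k *
          ((k : ℝ) / 2) ^ (n - l) := by
  have hdeg : ((X + C (r : ℝ)) ^ n).natDegree ≤ n := by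
    rw [natDegree_pow, natDegree_X_add_C, mul_one]
  have newton := ((X + C (r : ℝ)) ^ n).eval_eq_sum_descPochhammer_mul_fwdDiff_iter hdeg x
  simp only [eval_pow, eval_add, eval_X, eval_C] at newton
  calc ((r : ℝ) + x) ^ n
      = ∑ k ∈ range (n + 1), ∑ l ∈ range (n + 1),
          (descPochhammer ℝ k).eval x * (n.choose l : ℝ) * rcentralT r l k *
            ((k : ℝ) / 2) ^ (n - l) := by
        rw [add_comm, newton]
        refine sum_congr rfl fun k _ => ?_
        simp_rw [← sum_choose_mul_rcentralT_eq_fwdDiff_iter, mul_sum, mul_assoc]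
    _ = ∑ l ∈ range (n + 1), ∑ k ∈ range (l + 1),
          (descPochhammer ℝ k).eval x * (n.choose l : ℝ) * rcentralT r l k *
            ((k : ℝ) / 2) ^ (n - l) := by
        rw [sum_comm]
        refine sum_congr rfl fun l hl =>
          (sum_subset (range_subset_range.mpr (mem_range.mp hl)) fun k _ hk => ?_).symm
        rw [rcentralT_eq_zero_of_lt r (by simpa using hk), mul_zero, zero_mul]
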